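/- Let α > 0 and let Γ₁ = [a₁, a₁+α] × [b₁, b₁+α] and Γ₂ = [a₂, a₂+α] × [b₂, b₂+α] be two closed axis-parallel squares of side length α belonging to the same grid, i.e. a₂ − a₁ and b₂ − b₁ are integer multiples of α, and suppose Γ₁ and Γ₂ are non-neighbouring, i.e. max(|a₂ − a₁|, |b₂ − b₁|) ≥ 2α. Let A be a finite nonempty set of points in ℝ², let η > 0, and let 𝒞 be the maximal optimal partition of (A, η). Then there is at most one cluster C ∈ 𝒞 whose convex hull intersects both Γ₁ and Γ₂. -/

import Mathlib

/-!
Suppose two distinct clusters `C₁, C₂` have hulls meeting both squares, at points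
`pᵢ, qᵢ ∈ conv Cᵢ` lying in the first and the second square. As the squares are at least one cell
apart, `‖p₁ - p₂‖ + ‖q₁ - q₂‖ ≤ ‖p₁ - q₁‖ + ‖p₂ - q₂‖`. The perimeter is the integral of the
support function `s_C θ = sup_{p ∈ C} ⟨p, (cos θ, sin θ)⟩`, and
`s_{C₁ ∪ C₂} = max s_{C₁} s_{C₂} ≤ s_{C₁} + s_{C₂} - min s_{[p₁,q₁]} s_{[p₂,q₂]}`; the integral of
that minimum is `2‖p₁ - q₁‖ + 2‖p₂ - q₂‖` minus the perimeter of the quadrilateral `p₁q₁q₂p₂`,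
hence nonnegative. So merging `C₁` and `C₂` does not increase the total perimeter but saves the
opening cost `η`, contradicting optimality.
-/

noncomputable section

/-- The Euclidean plane. -/
abbrev Plane := EuclideanSpace ℝ (Fin 2)

/-- Perimeter of a bounded set via Cauchy's formula. -/
noncomputable def perim (C : Set Plane) : ℝ :=
  ∫ θ in (0:ℝ)..(2 * Real.pi),
    sSup ((fun p : Plane => p 0 * Real.cos θ + p 1 * Real.sin θ) '' C)

/-- `P` is a partition of `A` into nonempty clusters. -/
def IsPartition (A : Set Plane) (P : Finset (Set Plane)) : Prop :=
  (∀ C ∈ P, (C : Set Plane).Nonempty) ∧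
  (⋃₀ (P : Set (Set Plane)) = A) ∧
  ((P : Set (Set Plane)).PairwiseDisjoint id)

/-- Cost of a partition with opening cost `η` per cluster. -/
noncomputable def cost (η : ℝ) (P : Finset (Set Plane)) : ℝ :=
  η * P.card + ∑ C ∈ P, perim C

/-- `P` is an optimal partition for `(A, η)`. -/
def IsOptimalPartition (η : ℝ) (A : Set Plane) (P : Finset (Set Plane)) : Prop :=
  IsPartition A P ∧ ∀ Q : Finset (Set Plane), IsPartition A Q → cost η P ≤ cost η Q

/-- `A` is indivisible for `η`: the one-block partition `{A}` is optimal. -/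
def Indivisible (η : ℝ) (A : Set Plane) : Prop :=
  IsOptimalPartition η A {A}

/-- A maximal optimal partition of `(A, η)`. -/
def IsMaximalOptimal (η : ℝ) (A : Set Plane) (P : Finset (Set Plane)) : Prop :=
  IsOptimalPartition η A P ∧
  ¬ ∃ Q : Finset (Set Plane), IsOptimalPartition η A Q ∧ Q.card < P.card ∧
      ∀ C ∈ P, ∃ C' ∈ Q, C ⊆ C'

/-- The closed axis-parallel square `[a, a+α] × [b, b+α]` in the plane. -/
def square (a b α : ℝ) : Set Plane :=
  {p : Plane | p 0 ∈ Set.Icc a (a + α) ∧ p 1 ∈ Set.Icc b (b + α)}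

open Real intervalIntegral Set

def proj (θ : ℝ) (p : Plane) : ℝ := p 0 * cos θ + p 1 * sin θ

@[fun_prop]
lemma continuous_proj (p : Plane) : Continuous fun θ => proj θ p := by
  unfold proj; fun_prop

lemma proj_sub (θ : ℝ) (p q : Plane) : proj θ p - proj θ q = proj θ (p - q) := by
  simp only [proj, PiLp.sub_apply]; ring

lemma proj_add_pi (θ : ℝ) (p : Plane) : proj (θ + π) p = -proj θ p := by
  simp only [proj, cos_add_pi, sin_add_pi]; ring

lemma proj_add_two_pi (θ : ℝ) (p : Plane) : proj (θ + 2 * π) p = proj θ p := by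
  simp only [proj, cos_add_two_pi, sin_add_two_pi]

lemma integral_proj (p : Plane) : ∫ θ in (0)..(2 * π), proj θ p = 0 := by
  simp only [proj]
  rw [integral_add ((by fun_prop : Continuous _).intervalIntegrable _ _)
    ((by fun_prop : Continuous _).intervalIntegrable _ _), integral_const_mul, integral_const_mul,
    integral_cos, integral_sin]
  simp

lemma integral_abs_cos_sub (φ : ℝ) : ∫ θ in (0)..(2 * π), |cos (θ - φ)| = 4 := by
  have hper : Function.Periodic (fun θ => |cos (θ - φ)|) π := fun θ => by
    simp [add_sub_right_comm, cos_add_pi]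
  have hint : ∀ a b : ℝ,
      IntervalIntegrable (fun θ => |cos (θ - φ)|) MeasureTheory.volume a b :=
    fun _ _ => (by fun_prop : Continuous _).intervalIntegrable _ _
  have half : ∫ θ in (φ - π / 2)..(φ - π / 2 + π), |cos (θ - φ)| = 2 := by
    rw [integral_comp_sub_right (fun θ => |cos θ|), show φ - π / 2 + π - φ = π / 2 by ring,
      sub_sub_cancel_left, integral_congr (g := cos), integral_cos]
    · rw [sin_neg, sin_pi_div_two]; norm_num
    · intro θ hθ
      rw [uIcc_of_le (by linarith [pi_pos])] at hθ
      exact abs_of_nonneg (cos_nonneg_of_mem_Icc hθ)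
  have period := hper.intervalIntegral_add_eq 0 (φ - π / 2)
  rw [zero_add] at period
  rw [show (2 * π) = π + π by ring, hper.intervalIntegral_add_eq_add 0 π hint, zero_add, period,
    half]
  norm_num

lemma integral_abs_proj (v : Plane) : ∫ θ in (0)..(2 * π), |proj θ v| = 4 * ‖v‖ := by
  set z := Complex.orthonormalBasisOneI.repr.symm v
  have hz : ‖z‖ = ‖v‖ := LinearIsometryEquiv.norm_map _ v
  have hre : z.re = v 0 := by simp [z]
  have him : z.im = v 1 := by simp [z]
  have polar : ∀ θ, proj θ v = ‖v‖ * cos (θ - z.arg) := fun θ => by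
    rw [cos_sub, proj, ← hre, ← him, ← Complex.norm_mul_cos_arg, ← Complex.norm_mul_sin_arg,
      hz]
    ring
  simp_rw [polar, abs_mul, abs_norm]
  rw [integral_const_mul, integral_abs_cos_sub]
  ring

def supportFun (C : Set Plane) (θ : ℝ) : ℝ := sSup (proj θ '' C)

lemma perim_eq_integral_supportFun (C : Set Plane) :
    perim C = ∫ θ in (0)..(2 * π), supportFun C θ := rfl

lemma isLinearMap_proj (θ : ℝ) : IsLinearMap ℝ (proj θ) where
  map_add p q := by simp only [proj, PiLp.add_apply]; ring
  map_smul c p := by simp only [proj, PiLp.smul_apply, smul_eq_mul]; ring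

section supportFun

variable {C D : Set Plane}

lemma supportFun_eq_sup' (hC : C.Finite) (hne : C.Nonempty) (θ : ℝ) :
    supportFun C θ = hC.toFinset.sup' (by simpa using hne) (proj θ) := by
  rw [Finset.sup'_eq_csSup_image, Set.Finite.coe_toFinset, supportFun]

lemma continuous_supportFun (hC : C.Finite) (hne : C.Nonempty) : Continuous (supportFun C) := by
  simp_rw [funext (supportFun_eq_sup' hC hne)]
  exact Continuous.finset_sup'_apply _ fun p _ => continuous_proj p

lemma intervalIntegrable_supportFun (hC : C.Finite) (hne : C.Nonempty) (a b : ℝ) :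
    IntervalIntegrable (supportFun C) MeasureTheory.volume a b :=
  (continuous_supportFun hC hne).intervalIntegrable a b

lemma supportFun_union (hC : C.Finite) (hCne : C.Nonempty) (hD : D.Finite) (hDne : D.Nonempty)
    (θ : ℝ) : supportFun (C ∪ D) θ = max (supportFun C θ) (supportFun D θ) := by
  rw [supportFun, image_union, csSup_union (hC.image _).bddAbove (hCne.image _)
    (hD.image _).bddAbove (hDne.image _)]
  rfl

lemma supportFun_pair (p q : Plane) (θ : ℝ) :
    supportFun {p, q} θ = max (proj θ p) (proj θ q) := by
  rw [supportFun, image_pair, csSup_pair]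

lemma supportFun_le_of_subset_convexHull (hC : C.Finite) (hD : D.Nonempty)
    (hDC : D ⊆ convexHull ℝ C) (θ : ℝ) : supportFun D θ ≤ supportFun C θ := by
  have hC_sub : C ⊆ {w | proj θ w ≤ supportFun C θ} := fun p hp =>
    le_csSup (hC.image _).bddAbove (mem_image_of_mem (proj θ) hp)
  refine csSup_le (hD.image _) ?_
  rintro _ ⟨p, hp, rfl⟩
  exact convexHull_min hC_sub (convex_halfSpace_le (isLinearMap_proj θ) _) (hDC hp)

end supportFun

lemma perim_pair (p q : Plane) : perim {p, q} = 2 * ‖p - q‖ := by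
  have hmax : ∀ θ, supportFun {p, q} θ
      = (proj θ p + proj θ q) / 2 + |proj θ (p - q)| / 2 := fun θ => by
    rw [supportFun_pair, ← proj_sub]
    rcases le_total (proj θ p) (proj θ q) with h | h
    · rw [max_eq_right h, abs_of_nonpos (by linarith)]; ring
    · rw [max_eq_left h, abs_of_nonneg (by linarith)]; ring
  rw [perim_eq_integral_supportFun, funext hmax, integral_add, integral_div, integral_div,
    integral_add ((continuous_proj p).intervalIntegrable _ _)
    ((continuous_proj q).intervalIntegrable _ _), integral_proj, integral_proj,
    integral_abs_proj]
  · ring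
  all_goals exact (by fun_prop : Continuous _).intervalIntegrable _ _

lemma two_mul_max_sub_min_le (a b c d : ℝ) :
    2 * (max a (max b (max c d)) - min a (min b (min c d)))
      ≤ |a - b| + |b - c| + |c - d| + |d - a| := by
  have := le_abs_self (a - b); have := neg_le_abs (a - b)
  have := le_abs_self (b - c); have := neg_le_abs (b - c)
  have := le_abs_self (c - d); have := neg_le_abs (c - d)
  have := le_abs_self (d - a); have := neg_le_abs (d - a)
  have key : max a (max b (max c d))
      ≤ (|a - b| + |b - c| + |c - d| + |d - a|) / 2 + min a (min b (min c d)) := by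
    refine max_le ?_ (max_le ?_ (max_le ?_ ?_)) <;> rw [← sub_le_iff_le_add'] <;>
      refine le_min ?_ (le_min ?_ (le_min ?_ ?_)) <;> linarith
  linarith

lemma perim_quadrilateral_le (z₁ z₂ z₃ z₄ : Plane) :
    perim {z₁, z₂, z₃, z₄} ≤ ‖z₁ - z₂‖ + ‖z₂ - z₃‖ + ‖z₃ - z₄‖ + ‖z₄ - z₁‖ := by
  set M := supportFun {z₁, z₂, z₃, z₄}
  set m := fun θ => min (proj θ z₁) (min (proj θ z₂) (min (proj θ z₃) (proj θ z₄)))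
  have hM : ∀ θ, M θ = max (proj θ z₁) (max (proj θ z₂) (max (proj θ z₃) (proj θ z₄))) := by
    intro θ
    simp only [M, supportFun, image_insert_eq, image_singleton]
    rw [csSup_insert (by simp) (by simp), csSup_insert (by simp) (by simp), csSup_pair]
  have hMc : Continuous M := continuous_supportFun (toFinite _) (insert_nonempty _ _)
  have hmc : Continuous m := by fun_prop
  have hM_periodic : Function.Periodic M (2 * π) := fun θ => by simp only [hM, proj_add_two_pi]
  have hM_antipodal : ∀ θ, M (θ + π) = -m θ := fun θ => by
    simp only [hM, m, proj_add_pi, max_neg_neg]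
  -- so `perim` is half the integral of the width `M - m`
  have hMm : ∫ θ in (0)..(2 * π), M θ = -∫ θ in (0)..(2 * π), m θ := by
    have shift : ∫ θ in (0)..(2 * π), M (θ + π) = ∫ θ in (0)..(2 * π), M θ := by
      rw [integral_comp_add_right, zero_add, add_comm (2 * π),
        hM_periodic.intervalIntegral_add_eq π 0, zero_add]
    rw [← shift]
    simp only [hM_antipodal, integral_neg]
  set S : ℝ → ℝ := fun θ =>
    |proj θ (z₁ - z₂)| + |proj θ (z₂ - z₃)| + |proj θ (z₃ - z₄)| + |proj θ (z₄ - z₁)|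
  have hS : ∫ θ in (0)..(2 * π), S θ
      = 4 * (‖z₁ - z₂‖ + ‖z₂ - z₃‖ + ‖z₃ - z₄‖ + ‖z₄ - z₁‖) := by
    have hi : ∀ v : Plane,
        IntervalIntegrable (fun θ => |proj θ v|) MeasureTheory.volume 0 (2 * π) :=
      fun v => (by fun_prop : Continuous _).intervalIntegrable _ _
    simp only [S]
    rw [integral_add (((hi _).add (hi _)).add (hi _)) (hi _),
      integral_add ((hi _).add (hi _)) (hi _), integral_add (hi _) (hi _)]
    simp only [integral_abs_proj]
    ring
  have hpt : ∀ θ, 2 * (M θ - m θ) ≤ S θ := fun θ => by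
    simp only [hM, m, S, ← proj_sub]
    exact two_mul_max_sub_min_le _ _ _ _
  have hint : ∫ θ in (0)..(2 * π), 2 * (M θ - m θ) ≤ ∫ θ in (0)..(2 * π), S θ :=
    integral_mono_on (by positivity) ((by fun_prop : Continuous _).intervalIntegrable _ _)
      ((by fun_prop : Continuous S).intervalIntegrable _ _) (fun θ _ => hpt θ)
  rw [integral_const_mul, integral_sub (hMc.intervalIntegrable _ _) (hmc.intervalIntegrable _ _),
    hS, hMm] at hint
  rw [perim_eq_integral_supportFun, hMm]
  linarith

lemma perim_union_add_le {C D C' D' : Set Plane} (hC : C.Finite) (hD : D.Finite)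
    (hC' : C'.Finite) (hC'ne : C'.Nonempty) (hD' : D'.Finite) (hD'ne : D'.Nonempty)
    (hC'C : C' ⊆ convexHull ℝ C) (hD'D : D' ⊆ convexHull ℝ D) :
    perim (C ∪ D) + perim C' + perim D' ≤ perim C + perim D + perim (C' ∪ D') := by
  have hCne : C.Nonempty := convexHull_nonempty_iff.mp (hC'ne.mono hC'C)
  have hDne : D.Nonempty := convexHull_nonempty_iff.mp (hD'ne.mono hD'D)
  have hpt : ∀ θ, supportFun (C ∪ D) θ + supportFun C' θ + supportFun D' θ
      ≤ supportFun C θ + supportFun D θ + supportFun (C' ∪ D') θ := fun θ => by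
    have hC'θ := supportFun_le_of_subset_convexHull hC hC'ne hC'C θ
    have hD'θ := supportFun_le_of_subset_convexHull hD hD'ne hD'D θ
    rw [supportFun_union hC hCne hD hDne, supportFun_union hC' hC'ne hD' hD'ne]
    rcases le_total (supportFun C θ) (supportFun D θ) with h | h
    · rw [max_eq_right h]; linarith [le_max_right (supportFun C' θ) (supportFun D' θ)]
    · rw [max_eq_left h]; linarith [le_max_left (supportFun C' θ) (supportFun D' θ)]
  have hi : ∀ {E : Set Plane}, E.Finite → E.Nonempty →
      IntervalIntegrable (supportFun E) MeasureTheory.volume 0 (2 * π) :=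
    fun hE hEne => intervalIntegrable_supportFun hE hEne _ _
  have hCD := hi (hC.union hD) hCne.inl
  have hCD' := hi (hC'.union hD') hC'ne.inl
  simp only [perim_eq_integral_supportFun]
  rw [← integral_add hCD (hi hC' hC'ne),
    ← integral_add (hCD.add (hi hC' hC'ne)) (hi hD' hD'ne),
    ← integral_add (hi hC hCne) (hi hD hDne),
    ← integral_add ((hi hC hCne).add (hi hD hDne)) hCD']
  exact integral_mono_on (by positivity) ((hCD.add (hi hC' hC'ne)).add (hi hD' hD'ne))
    (((hi hC hCne).add (hi hD hDne)).add hCD') fun θ _ => hpt θ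

lemma perim_union_le_of_crossing {C D : Set Plane} (hC : C.Finite) (hD : D.Finite)
    {p₁ q₁ p₂ q₂ : Plane} (hp₁ : p₁ ∈ convexHull ℝ C) (hq₁ : q₁ ∈ convexHull ℝ C)
    (hp₂ : p₂ ∈ convexHull ℝ D) (hq₂ : q₂ ∈ convexHull ℝ D)
    (hcross : ‖p₁ - p₂‖ + ‖q₁ - q₂‖ ≤ ‖p₁ - q₁‖ + ‖p₂ - q₂‖) :
    perim (C ∪ D) ≤ perim C + perim D := by
  have hmerge := perim_union_add_le hC hD (toFinite {p₁, q₁}) (insert_nonempty _ _)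
    (toFinite {p₂, q₂}) (insert_nonempty _ _) (insert_subset hp₁ (singleton_subset_iff.mpr hq₁))
    (insert_subset hp₂ (singleton_subset_iff.mpr hq₂))
  have hquad : ({p₁, q₁} ∪ {p₂, q₂} : Set Plane) = {p₁, q₁, q₂, p₂} := by
    ext; simp only [mem_union, mem_insert_iff, mem_singleton_iff]; tauto
  have := perim_quadrilateral_le p₁ q₁ q₂ p₂
  rw [perim_pair, perim_pair, hquad] at hmerge
  rw [norm_sub_rev q₂ p₂, norm_sub_rev p₂ p₁] at this
  linarith

lemma norm_add_norm_le_of_separated {E : Type*} [SeminormedAddCommGroup E] (x : E → ℝ)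
    (hx : ∀ v w, x w - x v ≤ ‖v - w‖) {α s : ℝ} {p₁ p₂ q₁ q₂ : E}
    (hp : ‖p₁ - p₂‖ ≤ |x p₁ - x p₂| + α) (hq : ‖q₁ - q₂‖ ≤ |x q₁ - x q₂| + α)
    (hp₁ : x p₁ ≤ s) (hp₂ : x p₂ ≤ s) (hq₁ : s + α ≤ x q₁) (hq₂ : s + α ≤ x q₂) :
    ‖p₁ - p₂‖ + ‖q₁ - q₂‖ ≤ ‖p₁ - q₁‖ + ‖p₂ - q₂‖ := by
  have hxp : |x p₁ - x p₂| ≤ (s - x p₁) + (s - x p₂) :=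
    abs_sub_le_iff.mpr ⟨by linarith, by linarith⟩
  have hxq : |x q₁ - x q₂| ≤ (x q₁ - s - α) + (x q₂ - s - α) :=
    abs_sub_le_iff.mpr ⟨by linarith, by linarith⟩
  linarith [hx p₁ q₁, hx p₂ q₂]

lemma sub_apply_le_norm (i : Fin 2) (v w : Plane) : w i - v i ≤ ‖v - w‖ := by
  have := PiLp.norm_apply_le (v - w) i
  rw [PiLp.sub_apply, Real.norm_eq_abs] at this
  linarith [neg_abs_le (v i - w i)]

lemma norm_le_abs_add_abs (v : Plane) : ‖v‖ ≤ |v 0| + |v 1| := by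
  rw [EuclideanSpace.norm_eq, Fin.sum_univ_two, Real.norm_eq_abs, Real.norm_eq_abs,
    Real.sqrt_le_left (by positivity)]
  nlinarith [mul_nonneg (abs_nonneg (v 0)) (abs_nonneg (v 1))]

lemma norm_sub_le_of_mem_square {a b α : ℝ} {p p' : Plane} (hp : p ∈ square a b α)
    (hp' : p' ∈ square a b α) :
    ‖p - p'‖ ≤ |p 0 - p' 0| + α ∧ ‖p - p'‖ ≤ |p 1 - p' 1| + α := by
  obtain ⟨⟨hx, hx'⟩, hy, hy'⟩ := hp
  obtain ⟨⟨hpx, hpx'⟩, hpy, hpy'⟩ := hp'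
  have h0 : |p 0 - p' 0| ≤ α := abs_sub_le_iff.mpr ⟨by linarith, by linarith⟩
  have h1 : |p 1 - p' 1| ≤ α := abs_sub_le_iff.mpr ⟨by linarith, by linarith⟩
  have := norm_le_abs_add_abs (p - p')
  simp only [PiLp.sub_apply] at this
  constructor <;> linarith

lemma norm_add_norm_le_of_far_squares {α a₁ b₁ a₂ b₂ : ℝ}
    (hfar : max |a₂ - a₁| |b₂ - b₁| ≥ 2 * α) {p₁ p₂ q₁ q₂ : Plane}
    (hp₁ : p₁ ∈ square a₁ b₁ α) (hp₂ : p₂ ∈ square a₁ b₁ α)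
    (hq₁ : q₁ ∈ square a₂ b₂ α) (hq₂ : q₂ ∈ square a₂ b₂ α) :
    ‖p₁ - p₂‖ + ‖q₁ - q₂‖ ≤ ‖p₁ - q₁‖ + ‖p₂ - q₂‖ := by
  obtain ⟨hp0, hp1⟩ := norm_sub_le_of_mem_square hp₁ hp₂
  obtain ⟨hq0, hq1⟩ := norm_sub_le_of_mem_square hq₁ hq₂
  have swap (h : ‖q₁ - q₂‖ + ‖p₁ - p₂‖ ≤ ‖q₁ - p₁‖ + ‖q₂ - p₂‖) :
      ‖p₁ - p₂‖ + ‖q₁ - q₂‖ ≤ ‖p₁ - q₁‖ + ‖p₂ - q₂‖ := by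
    rw [norm_sub_rev q₁ p₁, norm_sub_rev q₂ p₂] at h
    linarith
  obtain ⟨⟨hp₁x, hp₁x'⟩, hp₁y, hp₁y'⟩ := hp₁
  obtain ⟨⟨hp₂x, hp₂x'⟩, hp₂y, hp₂y'⟩ := hp₂
  obtain ⟨⟨hq₁x, hq₁x'⟩, hq₁y, hq₁y'⟩ := hq₁
  obtain ⟨⟨hq₂x, hq₂x'⟩, hq₂y, hq₂y'⟩ := hq₂
  rcases le_max_iff.mp hfar with h | h <;> rcases le_abs'.mp h with h | h
  · exact swap (norm_add_norm_le_of_separated (· 0) (sub_apply_le_norm 0) hq0 hp0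
      (s := a₂ + α) hq₁x' hq₂x' (by linarith) (by linarith))
  · exact norm_add_norm_le_of_separated (· 0) (sub_apply_le_norm 0) hp0 hq0
      (s := a₁ + α) hp₁x' hp₂x' (by linarith) (by linarith)
  · exact swap (norm_add_norm_le_of_separated (· 1) (sub_apply_le_norm 1) hq1 hp1
      (s := b₂ + α) hq₁y' hq₂y' (by linarith) (by linarith))
  · exact norm_add_norm_le_of_separated (· 1) (sub_apply_le_norm 1) hp1 hq1
      (s := b₁ + α) hp₁y' hp₂y' (by linarith) (by linarith)

namespace IsPartition

variable {A C₁ C₂ : Set Plane} {P : Finset (Set Plane)}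

lemma subset_of_mem (hP : IsPartition A P) {C : Set Plane} (hC : C ∈ P) : C ⊆ A :=
  hP.2.1 ▸ subset_sUnion_of_mem (Finset.mem_coe.mpr hC)

variable [DecidableEq (Set Plane)]

lemma merge (hP : IsPartition A P) (hC₁ : C₁ ∈ P) (hC₂ : C₂ ∈ P) :
    IsPartition A (insert (C₁ ∪ C₂) (P \ {C₁, C₂})) := by
  obtain ⟨hne, hcover, hdisj⟩ := hP
  refine ⟨?_, ?_, ?_⟩
  · intro C hC
    rcases Finset.mem_insert.mp hC with rfl | hC
    · exact (hne C₁ hC₁).inl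
    · exact hne C (Finset.sdiff_subset hC)
  · rw [← hcover]
    ext x
    simp only [Finset.coe_insert, Finset.coe_sdiff, sUnion_insert, mem_union, mem_sUnion,
      Finset.mem_coe, mem_sdiff, Finset.coe_singleton, mem_insert_iff, mem_singleton_iff]
    constructor
    · rintro ((hx | hx) | ⟨D, ⟨hD, -⟩, hx⟩)
      exacts [⟨C₁, hC₁, hx⟩, ⟨C₂, hC₂, hx⟩, ⟨D, hD, hx⟩]
    · rintro ⟨D, hD, hx⟩
      by_cases h : D = C₁ ∨ D = C₂
      · rcases h with rfl | rfl <;> simp [hx]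
      · exact Or.inr ⟨D, ⟨hD, h⟩, hx⟩
  · rw [Finset.coe_insert]
    refine (hdisj.subset (by simp)).insert fun D hD _ => ?_
    simp only [Finset.coe_sdiff, Finset.coe_pair, mem_sdiff, Finset.mem_coe, mem_insert_iff,
      mem_singleton_iff, not_or] at hD
    exact disjoint_union_left.mpr
      ⟨hdisj hC₁ hD.1 (Ne.symm hD.2.1), hdisj hC₂ hD.1 (Ne.symm hD.2.2)⟩

lemma cost_merge (η : ℝ) (hP : IsPartition A P) (hC₁ : C₁ ∈ P) (hC₂ : C₂ ∈ P)
    (hne : C₁ ≠ C₂) :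
    cost η (insert (C₁ ∪ C₂) (P \ {C₁, C₂}))
      = cost η P - η + perim (C₁ ∪ C₂) - perim C₁ - perim C₂ := by
  have hsub : ({C₁, C₂} : Finset (Set Plane)) ⊆ P :=
    Finset.insert_subset hC₁ (Finset.singleton_subset_iff.mpr hC₂)
  have hnotMem : C₁ ∪ C₂ ∉ P \ {C₁, C₂} := by
    intro h
    simp only [Finset.mem_sdiff, Finset.mem_insert, Finset.mem_singleton, not_or] at h
    obtain ⟨x, hx⟩ := hP.1 C₁ hC₁
    exact disjoint_left.mp (hP.2.2 h.1 hC₁ h.2.1) (mem_union_left _ hx) hx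
  have hcard := Finset.card_sdiff_add_card_eq_card hsub
  have hsum := Finset.sum_sdiff hsub (f := perim)
  rw [Finset.card_pair hne] at hcard
  rw [Finset.sum_pair hne] at hsum
  simp only [cost, Finset.card_insert_of_notMem hnotMem, Finset.sum_insert hnotMem]
  rw [← hcard] at *
  push_cast
  linarith

end IsPartition

lemma IsOptimalPartition.perim_add_lt_perim_union {η : ℝ} {A C₁ C₂ : Set Plane}
    {P : Finset (Set Plane)} (hP : IsOptimalPartition η A P) (hη : 0 < η) (hC₁ : C₁ ∈ P)
    (hC₂ : C₂ ∈ P) (hne : C₁ ≠ C₂) : perim C₁ + perim C₂ < perim (C₁ ∪ C₂) := by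
  classical
  have := hP.2 _ (hP.1.merge hC₁ hC₂)
  rw [hP.1.cost_merge η hC₁ hC₂ hne] at this
  linarith

theorem at_most_one_cluster_intersecting_two_far_cells_general
    (α : ℝ) (a₁ b₁ a₂ b₂ : ℝ)
    (hfar : max |a₂ - a₁| |b₂ - b₁| ≥ 2 * α)
    (A : Set Plane) (hA : A.Finite) (η : ℝ) (hη : 0 < η)
    (P : Finset (Set Plane)) (hP : IsMaximalOptimal η A P) :
    ∀ C₁ ∈ P, ∀ C₂ ∈ P,
      (convexHull ℝ C₁ ∩ square a₁ b₁ α).Nonempty →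
      (convexHull ℝ C₁ ∩ square a₂ b₂ α).Nonempty →
      (convexHull ℝ C₂ ∩ square a₁ b₁ α).Nonempty →
      (convexHull ℝ C₂ ∩ square a₂ b₂ α).Nonempty →
      C₁ = C₂ := by
  intro C₁ hC₁ C₂ hC₂ ⟨p₁, hp₁, hp₁s⟩ ⟨q₁, hq₁, hq₁s⟩ ⟨p₂, hp₂, hp₂s⟩ ⟨q₂, hq₂, hq₂s⟩
  by_contra hne
  have hopt := hP.1
  have hcross := norm_add_norm_le_of_far_squares hfar hp₁s hp₂s hq₁s hq₂s
  have hmerge := perim_union_le_of_crossing (hA.subset (hopt.1.subset_of_mem hC₁))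
    (hA.subset (hopt.1.subset_of_mem hC₂)) hp₁ hq₁ hp₂ hq₂ hcross
  exact (hopt.perim_add_lt_perim_union hη hC₁ hC₂ hne).not_ge hmerge

/-- at most one cluster of the maximal optimal partition has a convex
hull intersecting both of two non-neighbouring grid squares. -/
theorem at_most_one_cluster_intersecting_two_far_cells
    (α : ℝ) (hα : 0 < α) (a₁ b₁ a₂ b₂ : ℝ)
    (hgridx : ∃ m : ℤ, a₂ - a₁ = (m : ℝ) * α)
    (hgridy : ∃ m : ℤ, b₂ - b₁ = (m : ℝ) * α)
    (hfar : max |a₂ - a₁| |b₂ - b₁| ≥ 2 * α)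
    (A : Set Plane) (hA : A.Finite) (hAne : A.Nonempty) (η : ℝ) (hη : 0 < η)
    (P : Finset (Set Plane)) (hP : IsMaximalOptimal η A P) :
    ∀ C₁ ∈ P, ∀ C₂ ∈ P,
      (convexHull ℝ C₁ ∩ square a₁ b₁ α).Nonempty →
      (convexHull ℝ C₁ ∩ square a₂ b₂ α).Nonempty →
      (convexHull ℝ C₂ ∩ square a₁ b₁ α).Nonempty →
      (convexHull ℝ C₂ ∩ square a₂ b₂ α).Nonempty →
      C₁ = C₂ :=
  at_most_one_cluster_intersecting_two_far_cells_general α a₁ b₁ a₂ b₂ hfar A hA η hη P hP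

end
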